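/- (Nondegeneracy of heteroclinic orbits, Theorem 1.) Let e: ℝ → ℂ be a heteroclinic orbit of W connecting two distinct zeros a^± of f, i.e. a C² solution of e''(x) = ∇W(e(x)) with lim_{x→±∞} e(x) = a^±, f(a^±) = 0, a^− ≠ a^+, and lim_{x→±∞} e'(x) = 0; assume the Hessians D²W(a^±) are positive definite (equivalently, since f(a^±)=0, that f'(a^±) ≠ 0). Let h: ℝ → ℂ be a C² map such that h and h' are square-integrable on ℝ, h(x) → 0 and h'(x) → 0 as x → ±∞, and h''(x) = D²W(e(x))·h(x) for all x ∈ ℝ. Then there exists a constant λ ∈ ℝ such that h(x) = λ·e'(x) for all x ∈ ℝ. -/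

import Mathlib

/-!
Since `W = |f|²`, a heteroclinic orbit has zero energy, `|e'|² = 2 W(e)`, and this turns the
orbit equation into the first-order equation `e' = c · conj (f ∘ e)` with `|c|² = 2`; here
`f ∘ e` never vanishes, since an orbit through a zero of `f` with zero velocity is constant.
With `B = c · conj (f' ∘ e)` the linearized operator factors as `(∂ + B conj)(∂ - B conj)`,
so `A = h' - B conj h` solves `A' = -B conj A`, and then `(Re (conj A · h))' = |A|²`. A monotone
function vanishing at both ends is zero, hence `A = 0`: both `h` and `e'` solve `y' = B conj y`.
The Wronskian `Im (conj e' · h)` of that equation is constant, hence zero, which makes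
`h / e'` a real constant.
-/

open MeasureTheory Complex Filter

/-- `W(z) = |f(z)|²` as a function of two real variables. -/
noncomputable def W (f : ℂ → ℂ) (z : ℂ) : ℝ := ‖f z‖ ^ 2

open ComplexConjugate Topology

theorem Complex.eq_of_forall_re_mul_eq {a b : ℂ} (h : ∀ k : ℂ, (a * k).re = (b * k).re) :
    a = b := by
  have h1 := h 1
  have hI := h I
  simp only [mul_one, mul_I_re, neg_inj] at h1 hI
  exact Complex.ext h1 hI

theorem eq_of_hasDerivAt_zero_of_tendsto {E : Type*} [NormedAddCommGroup E] [NormedSpace ℝ E]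
    {N : ℝ → E} {l : Filter ℝ} [l.NeBot] {L : E} (hN : ∀ x, HasDerivAt N 0 x)
    (hlim : Tendsto N l (𝓝 L)) (x : ℝ) : N x = L := by
  have hconst : ∀ y, N y = N x := fun y =>
    is_const_of_deriv_eq_zero (fun y => (hN y).differentiableAt) (fun y => (hN y).deriv) y x
  exact tendsto_nhds_unique (tendsto_const_nhds.congr fun y => (hconst y).symm) hlim

theorem eq_of_hasDerivAt_of_eq_equilibrium {E : Type*} [NormedAddCommGroup E]
    [NormedSpace ℝ E] {F : E → E} (hF : ContDiff ℝ 1 F) {u : ℝ → E}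
    (hu : ∀ t, HasDerivAt u (F (u t)) t) {p : E} (hp : F p = 0) {t₀ : ℝ} (ht₀ : u t₀ = p)
    (t : ℝ) : u t = p := by
  have hcont : Continuous u := continuous_iff_continuousAt.mpr fun t => (hu t).continuousAt
  suffices hS : IsClopen {t | u t = p} from
    Set.eq_univ_iff_forall.mp (hS.eq_univ ⟨t₀, ht₀⟩) t
  refine ⟨isClosed_eq hcont continuous_const, isOpen_iff_mem_nhds.mpr fun t₁ ht₁ => ?_⟩
  obtain ⟨K, s, hs, hlip⟩ := (hF.contDiffAt (x := p)).exists_lipschitzOnWith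
  have hus : ∀ᶠ t in 𝓝 t₁, u t ∈ s :=
    hcont.continuousAt.preimage_mem_nhds (by rwa [show u t₁ = p from ht₁])
  have hconst : ∀ᶠ t in 𝓝 t₁, HasDerivAt (fun _ => p) (F p) t ∧ p ∈ s :=
    Eventually.of_forall fun t => ⟨hp ▸ hasDerivAt_const t p, mem_of_mem_nhds hs⟩
  exact ODE_solution_unique_of_eventually (v := fun _ => F) (Eventually.of_forall fun _ => hlip)
    (hus.mono fun t ht => ⟨hu t, ht⟩) hconst ht₁

section ConjLinearODE

variable {B : ℝ → ℂ}

theorem eq_zero_of_hasDerivAt_neg_mul_conj {A h : ℝ → ℂ}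
    (hh : ∀ x, HasDerivAt h (A x + B x * conj (h x)) x)
    (hA : ∀ x, HasDerivAt A (-(B x * conj (A x))) x)
    (hAbot : Tendsto A atBot (𝓝 0)) (hAtop : Tendsto A atTop (𝓝 0))
    (hhbot : Tendsto h atBot (𝓝 0)) (hhtop : Tendsto h atTop (𝓝 0)) (x : ℝ) : A x = 0 := by
  set φ : ℝ → ℝ := fun t => (conj (A t) * h t).re
  have hφ : ∀ x, HasDerivAt φ (‖A x‖ ^ 2) x := by
    intro x
    refine (reCLM.hasFDerivAt.comp_hasDerivAt x ((hA x).star.mul (hh x))).congr_deriv ?_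
    simp only [reCLM_apply, Complex.star_def, Complex.sq_norm, Complex.normSq_apply, map_neg,
      map_mul, Complex.conj_conj, Complex.add_re, Complex.add_im, Complex.neg_re, Complex.neg_im,
      Complex.mul_re, Complex.mul_im, Complex.conj_re, Complex.conj_im]
    ring
  have hφlim {l : Filter ℝ} (hAl : Tendsto A l (𝓝 0)) (hhl : Tendsto h l (𝓝 0)) :
      Tendsto φ l (𝓝 0) := by
    have hprod : Tendsto (fun t => conj (A t) * h t) l (𝓝 0) := by
      simpa using hAl.star.mul hhl
    exact (Complex.continuous_re.tendsto 0).comp hprod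
  have hmono : Monotone φ := monotone_of_deriv_nonneg (fun x => (hφ x).differentiableAt)
    fun x => (hφ x).deriv ▸ sq_nonneg _
  have hφ0 : φ = fun _ => 0 := funext fun x =>
    le_antisymm (hmono.ge_of_tendsto (hφlim hAtop hhtop) x)
      (hmono.le_of_tendsto (hφlim hAbot hhbot) x)
  have hnorm : ‖A x‖ ^ 2 = 0 := (hφ x).unique (hφ0 ▸ hasDerivAt_const x 0)
  simpa using hnorm

theorem exists_real_mul_eq_of_hasDerivAt_mul_conj {y₁ y₂ : ℝ → ℂ}
    (hy₁ : ∀ x, HasDerivAt y₁ (B x * conj (y₁ x)) x)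
    (hy₂ : ∀ x, HasDerivAt y₂ (B x * conj (y₂ x)) x) (hne : ∀ x, y₁ x ≠ 0)
    {l : Filter ℝ} [l.NeBot] (hlim : Tendsto (fun x => conj (y₁ x) * y₂ x) l (𝓝 0)) :
    ∃ r : ℝ, ∀ x, y₂ x = r * y₁ x := by
  have hω : ∀ x, HasDerivAt (fun t => (conj (y₁ t) * y₂ t).im) 0 x := by
    intro x
    refine (imCLM.hasFDerivAt.comp_hasDerivAt x ((hy₁ x).star.mul (hy₂ x))).congr_deriv ?_
    simp only [imCLM_apply, Complex.star_def, map_mul, Complex.conj_conj, Complex.add_im,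
      Complex.mul_re, Complex.mul_im, Complex.conj_re, Complex.conj_im]
    ring
  have hreal : ∀ x, conj (y₁ x) * y₂ x = y₁ x * conj (y₂ x) := fun x => by
    have him := eq_of_hasDerivAt_zero_of_tendsto hω
      (by simpa only [Function.comp_def, Complex.zero_im] using
        (Complex.continuous_im.tendsto 0).comp hlim) x
    simpa [mul_comm] using (Complex.conj_eq_iff_im.mpr him).symm
  have hquot : ∀ x, HasDerivAt (fun t => y₂ t / y₁ t) 0 x := by
    intro x
    refine ((hy₂ x).div (hy₁ x) (hne x)).congr_deriv ?_
    rw [div_eq_zero_iff]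
    left
    linear_combination -B x * hreal x
  have hconst : ∀ x, y₂ x / y₁ x = y₂ 0 / y₁ 0 := fun x =>
    is_const_of_deriv_eq_zero (fun y => (hquot y).differentiableAt) (fun y => (hquot y).deriv) x 0
  have hquot_real : conj (y₂ 0 / y₁ 0) = y₂ 0 / y₁ 0 := by
    rw [map_div₀, div_eq_div_iff ((map_ne_zero _).mpr (hne 0)) (hne 0)]
    linear_combination -hreal 0
  obtain ⟨r, hr⟩ := Complex.conj_eq_iff_real.mp hquot_real
  exact ⟨r, fun x => by rw [← hr, ← hconst x, div_mul_cancel₀ _ (hne x)]⟩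

end ConjLinearODE

section HessianW

variable {f : ℂ → ℂ}

theorem hasFDerivAt_W (hf : Differentiable ℂ f) (z : ℂ) :
    HasFDerivAt (W f)
      (reCLM.comp (ContinuousLinearMap.mul ℝ ℂ (2 * conj (f z) * deriv f z))) z := by
  refine ((hf z).hasDerivAt.hasFDerivAt.restrictScalars ℝ).norm_sq.congr_fderiv ?_
  ext v
  simp only [smul_apply, ContinuousLinearMap.comp_apply, ContinuousLinearMap.coe_restrictScalars',
    ContinuousLinearMap.toSpanSingleton_apply, smul_eq_mul, coe_innerSL_apply, Complex.inner,
    ContinuousLinearMap.mul_apply', reCLM_apply, nsmul_eq_mul, Nat.cast_ofNat, Complex.mul_re,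
    Complex.mul_im, Complex.conj_re, Complex.conj_im, Complex.re_ofNat, Complex.im_ofNat]
  ring

theorem gradient_W (hf : Differentiable ℂ f) (z : ℂ) :
    gradient (W f) z = 2 * f z * conj (deriv f z) := by
  refine (hasGradientAt_iff_hasFDerivAt.mpr ((hasFDerivAt_W hf z).congr_fderiv ?_)).gradient
  ext v
  simp only [ContinuousLinearMap.comp_apply, ContinuousLinearMap.mul_apply', reCLM_apply,
    InnerProductSpace.toDual_apply_apply, Complex.inner, map_mul, Complex.conj_conj, map_ofNat]
  congr 1
  ring

theorem fderiv_fderiv_W_apply (hf : Differentiable ℂ f) (z u k : ℂ) :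
    fderiv ℝ (fderiv ℝ (W f)) z u k
      = ((2 * conj (f z) * deriv (deriv f) z * u
          + 2 * conj (deriv f z) * deriv f z * conj u) * k).re := by
  let Θ : ℂ →L[ℝ] ℂ →L[ℝ] ℝ :=
    (ContinuousLinearMap.compL ℝ ℂ ℂ ℝ reCLM).comp (ContinuousLinearMap.mul ℝ ℂ)
  have hW' : fderiv ℝ (W f) = fun w => Θ (2 * conj (f w) * deriv f w) :=
    funext fun w => (hasFDerivAt_W hf w).fderiv
  have h1 := (hf z).hasDerivAt.hasFDerivAt.restrictScalars ℝ
  have h2 := (hf.deriv z).hasDerivAt.hasFDerivAt.restrictScalars ℝ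
  have hg : HasFDerivAt (fun w => Θ (2 * conj (f w) * deriv f w)) _ z :=
    Θ.hasFDerivAt.comp z ((h1.star.const_mul (2 : ℂ)).mul h2)
  rw [hW', hg.fderiv]
  simp only [Θ, ContinuousLinearMap.compL_apply, ContinuousLinearMap.comp_apply,
    add_apply, smul_apply,
    ContinuousLinearMap.coe_restrictScalars', ContinuousLinearMap.toSpanSingleton_apply,
    smul_eq_mul, ContinuousLinearEquiv.coe_coe, starL'_apply, Complex.star_def, map_mul,
    ContinuousLinearMap.mul_apply', reCLM_apply]
  congr 1
  ring

theorem eq_of_forall_re_conj_mul_eq_fderiv_fderiv_W (hf : Differentiable ℂ f) {z v w : ℂ}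
    (hw : ∀ k, (conj w * k).re = fderiv ℝ (fderiv ℝ (W f)) z v k) :
    w = 2 * deriv f z * conj (deriv f z) * v + 2 * f z * conj (deriv (deriv f) z * v) := by
  rw [← Complex.conj_conj w,
    Complex.eq_of_forall_re_mul_eq fun k => (hw k).trans (fderiv_fderiv_W_apply hf z v k)]
  simp only [map_add, map_mul, Complex.conj_conj, map_ofNat]
  ring

end HessianW

section HeteroclinicOrbit

variable {f : ℂ → ℂ} {e : ℝ → ℂ}

theorem norm_deriv_sq_eq_two_mul_W (hf : Differentiable ℂ f)
    (he : ∀ x, HasDerivAt e (deriv e x) x)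
    (he' : ∀ x, HasDerivAt (deriv e) (2 * f (e x) * conj (deriv f (e x))) x)
    {l : Filter ℝ} [l.NeBot] {a : ℂ} (hfa : f a = 0) (hlim : Tendsto e l (𝓝 a))
    (hlim' : Tendsto (deriv e) l (𝓝 0)) (x : ℝ) :
    ‖deriv e x‖ ^ 2 = 2 * W f (e x) := by
  have hN : ∀ x, HasDerivAt (fun t => ‖deriv e t‖ ^ 2 - 2 * W f (e t)) 0 x := by
    intro x
    have hfe := ((hf (e x)).hasDerivAt.comp x (he x)).norm_sq
    refine ((he' x).norm_sq.sub (hfe.const_mul 2)).congr_deriv ?_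
    simp only [Function.comp_apply, Complex.inner, Complex.mul_re, Complex.mul_im,
      Complex.conj_re, Complex.conj_im, Complex.re_ofNat, Complex.im_ofNat]
    ring
  have hN0 : Tendsto (fun t => ‖deriv e t‖ ^ 2 - 2 * W f (e t)) l (𝓝 0) := by
    have hfe : Tendsto (fun t => f (e t)) l (𝓝 0) := hfa ▸ (hf.continuous.tendsto a).comp hlim
    simpa [W] using (hlim'.norm.pow 2).sub ((hfe.norm.pow 2).const_mul 2)
  exact sub_eq_zero.mp (eq_of_hasDerivAt_zero_of_tendsto hN hN0 x)

theorem eq_of_orbit_of_eq_zero (hf : Differentiable ℂ f)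
    (he : ∀ x, HasDerivAt e (deriv e x) x)
    (he' : ∀ x, HasDerivAt (deriv e) (2 * f (e x) * conj (deriv f (e x))) x)
    {x₀ : ℝ} (hfx₀ : f (e x₀) = 0) (hx₀ : deriv e x₀ = 0) (x : ℝ) : e x = e x₀ := by
  let F : ℂ × ℂ → ℂ × ℂ := fun p => (p.2, 2 * f p.1 * conj (deriv f p.1))
  have hF : ContDiff ℝ 1 F := by
    have hG : ContDiff ℝ 1 fun z => 2 * f z * conj (deriv f z) :=
      (contDiff_const.mul (hf.contDiff.restrict_scalars ℝ)).mul
        (Complex.conjCLE.contDiff.comp (hf.deriv.contDiff.restrict_scalars ℝ))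
    exact contDiff_snd.prodMk (hG.comp contDiff_fst)
  have hu : ∀ t, HasDerivAt (fun t => (e t, deriv e t)) (F (e t, deriv e t)) t :=
    fun t => (he t).prodMk (he' t)
  have hp : F (e x₀, 0) = 0 := by simp [F, hfx₀]
  exact congrArg Prod.fst
    (eq_of_hasDerivAt_of_eq_equilibrium hF hu hp (t₀ := x₀) (by rw [hx₀]) x)

theorem comp_ne_zero_of_orbit (hf : Differentiable ℂ f)
    (he : ∀ x, HasDerivAt e (deriv e x) x)
    (he' : ∀ x, HasDerivAt (deriv e) (2 * f (e x) * conj (deriv f (e x))) x)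
    (henergy : ∀ x, ‖deriv e x‖ ^ 2 = 2 * W f (e x)) {a b : ℂ}
    (ha : Tendsto e atBot (𝓝 a)) (hb : Tendsto e atTop (𝓝 b)) (hab : a ≠ b) (x : ℝ) :
    f (e x) ≠ 0 := by
  intro hfx
  have hdx : deriv e x = 0 := by simpa [W, hfx] using henergy x
  have hconst : Tendsto e ⊤ (𝓝 (e x)) :=
    tendsto_const_nhds.congr fun y => (eq_of_orbit_of_eq_zero hf he he' hfx hdx y).symm
  exact hab ((tendsto_nhds_unique ha (hconst.mono_left le_top)).trans
    (tendsto_nhds_unique hb (hconst.mono_left le_top)).symm)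

theorem exists_deriv_eq_mul_conj_of_orbit (hf : Differentiable ℂ f)
    (he : ∀ x, HasDerivAt e (deriv e x) x)
    (he' : ∀ x, HasDerivAt (deriv e) (2 * f (e x) * conj (deriv f (e x))) x)
    (henergy : ∀ x, ‖deriv e x‖ ^ 2 = 2 * W f (e x)) (hfe : ∀ x, f (e x) ≠ 0) :
    ∃ c : ℂ, c * conj c = 2 ∧ ∀ x, deriv e x = c * conj (f (e x)) := by
  have henergy' : ∀ x, deriv e x * conj (deriv e x) = 2 * (f (e x) * conj (f (e x))) := by
    intro x
    rw [Complex.mul_conj', Complex.mul_conj']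
    exact_mod_cast henergy x
  have hfe' : ∀ x, conj (f (e x)) ≠ 0 := fun x => (map_ne_zero _).mpr (hfe x)
  have hr : ∀ x, HasDerivAt (fun t => deriv e t / conj (f (e t))) 0 x := by
    intro x
    have hcfe := ((hf (e x)).hasDerivAt.comp x (he x)).star
    refine ((he' x).div hcfe (hfe' x)).congr_deriv ?_
    rw [div_eq_zero_iff, Complex.star_def]
    left
    simp only [Function.comp_apply, map_mul]
    linear_combination (-conj (deriv f (e x))) * henergy' x
  have hconst : ∀ x, deriv e x / conj (f (e x)) = deriv e 0 / conj (f (e 0)) := fun x =>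
    is_const_of_deriv_eq_zero (fun y => (hr y).differentiableAt) (fun y => (hr y).deriv) x 0
  refine ⟨deriv e 0 / conj (f (e 0)), ?_, fun x => (div_eq_iff (hfe' x)).mp (hconst x)⟩
  rw [map_div₀, Complex.conj_conj, div_mul_div_comm, div_eq_iff (mul_ne_zero (hfe' 0) (hfe 0)),
    henergy' 0]
  ring

end HeteroclinicOrbit

section Linearization

variable {f : ℂ → ℂ} {e : ℝ → ℂ} {c : ℂ}

theorem hasDerivAt_deriv_eq_mul_conj_of_orbit
    (he' : ∀ x, HasDerivAt (deriv e) (2 * f (e x) * conj (deriv f (e x))) x)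
    (hc : c * conj c = 2) (hbog : ∀ x, deriv e x = c * conj (f (e x))) (x : ℝ) :
    HasDerivAt (deriv e) (c * conj (deriv f (e x)) * conj (deriv e x)) x := by
  refine (he' x).congr_deriv ?_
  rw [hbog x, map_mul, Complex.conj_conj]
  linear_combination -(f (e x) * conj (deriv f (e x))) * hc

theorem hasDerivAt_linearization_factor (hf : Differentiable ℂ f)
    (he : ∀ x, HasDerivAt e (deriv e x) x)
    (hc : c * conj c = 2) (hbog : ∀ x, deriv e x = c * conj (f (e x))) {h : ℝ → ℂ}
    (hh : ∀ x, HasDerivAt h (deriv h x) x)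
    (hh' : ∀ x, HasDerivAt (deriv h) (2 * deriv f (e x) * conj (deriv f (e x)) * h x
      + 2 * f (e x) * conj (deriv (deriv f) (e x) * h x)) x) (x : ℝ) :
    HasDerivAt (fun t => deriv h t - c * conj (deriv f (e t)) * conj (h t))
      (-(c * conj (deriv f (e x)) *
        conj (deriv h x - c * conj (deriv f (e x)) * conj (h x)))) x := by
  have hdfe := ((hf.deriv (e x)).hasDerivAt.comp x (he x)).star
  refine ((hh' x).sub ((hdfe.const_mul c).mul (hh x).star)).congr_deriv ?_
  have hbog' : conj (deriv e x) = conj c * f (e x) := by simp [hbog x]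
  simp only [Function.comp_apply, Complex.star_def, map_mul, map_sub, Complex.conj_conj]
  linear_combination (-c * conj (deriv (deriv f) (e x)) * conj (h x)) * hbog'
    - (f (e x) * conj (deriv (deriv f) (e x)) * conj (h x)
      + conj (deriv f (e x)) * deriv f (e x) * h x) * hc

theorem tendsto_linearization_factor (hf : Differentiable ℂ f) {l : Filter ℝ} {a : ℂ}
    (hlim : Tendsto e l (𝓝 a)) {h : ℝ → ℂ} (hh : Tendsto h l (𝓝 0))
    (hh' : Tendsto (deriv h) l (𝓝 0)) :
    Tendsto (fun t => deriv h t - c * conj (deriv f (e t)) * conj (h t)) l (𝓝 0) := by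
  have hdfe := (hf.deriv.continuous.tendsto a).comp hlim
  simpa using hh'.sub ((hdfe.star.const_mul c).mul hh.star)

end Linearization

theorem statement13_general (f : ℂ → ℂ) (hf : Differentiable ℂ f)
    (e : ℝ → ℂ) (he : ContDiff ℝ 2 e)
    (hODE : ∀ x : ℝ, deriv (deriv e) x = gradient (W f) (e x))
    (aminus aplus : ℂ) (hfp : f aplus = 0) (hne : aminus ≠ aplus)
    (hlimB : Tendsto e atBot (nhds aminus)) (hlimT : Tendsto e atTop (nhds aplus))
    (hlimT' : Tendsto (deriv e) atTop (nhds 0))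
    (h : ℝ → ℂ) (hh : ContDiff ℝ 2 h)
    (hh0B : Tendsto h atBot (nhds 0)) (hh0T : Tendsto h atTop (nhds 0))
    (hh1B : Tendsto (deriv h) atBot (nhds 0)) (hh1T : Tendsto (deriv h) atTop (nhds 0))
    (hlin : ∀ x : ℝ, ∀ k : ℂ,
      ((starRingEnd ℂ) (deriv (deriv h) x) * k).re
        = fderiv ℝ (fderiv ℝ (W f)) (e x) (h x) k) :
    ∃ lam : ℝ, ∀ x : ℝ, h x = (lam : ℂ) * deriv e x := by
  have he₁ : ∀ x, HasDerivAt e (deriv e x) x := fun x =>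
    (he.differentiable two_ne_zero x).hasDerivAt
  have he₂ : ∀ x, HasDerivAt (deriv e) (2 * f (e x) * conj (deriv f (e x))) x := fun x => by
    simpa [hODE, gradient_W hf] using (he.differentiable_deriv_two x).hasDerivAt
  have hh₁ : ∀ x, HasDerivAt h (deriv h x) x := fun x =>
    (hh.differentiable two_ne_zero x).hasDerivAt
  have hh₂ : ∀ x, HasDerivAt (deriv h) (2 * deriv f (e x) * conj (deriv f (e x)) * h x
      + 2 * f (e x) * conj (deriv (deriv f) (e x) * h x)) x := fun x =>
    (hh.differentiable_deriv_two x).hasDerivAt.congr_deriv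
      (eq_of_forall_re_conj_mul_eq_fderiv_fderiv_W hf (hlin x))
  have henergy := norm_deriv_sq_eq_two_mul_W hf he₁ he₂ hfp hlimT hlimT'
  have hfe := comp_ne_zero_of_orbit hf he₁ he₂ henergy hlimB hlimT hne
  obtain ⟨c, hc, hbog⟩ := exists_deriv_eq_mul_conj_of_orbit hf he₁ he₂ henergy hfe
  have hfactor := eq_zero_of_hasDerivAt_neg_mul_conj (fun x => (hh₁ x).congr_deriv (by ring))
    (hasDerivAt_linearization_factor hf he₁ hc hbog hh₁ hh₂)
    (tendsto_linearization_factor hf hlimB hh0B hh1B)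
    (tendsto_linearization_factor hf hlimT hh0T hh1T) hh0B hh0T
  have hde : ∀ x, deriv e x ≠ 0 := fun x => by
    rw [hbog x]
    exact mul_ne_zero (left_ne_zero_of_mul (hc ▸ two_ne_zero)) ((map_ne_zero _).mpr (hfe x))
  exact exists_real_mul_eq_of_hasDerivAt_mul_conj
    (hasDerivAt_deriv_eq_mul_conj_of_orbit he₂ hc hbog)
    (fun x => (hh₁ x).congr_deriv (sub_eq_zero.mp (hfactor x))) hde
    (by simpa using hlimT'.star.mul hh0T)

/-- Nondegeneracy of heteroclinic orbits (Theorem 1).  Let `e` be a heteroclinic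
orbit of `W` connecting two distinct zeros `a^±` of `f` (a `C²` solution of
`e'' = ∇W(e)` with `e → a^±`, `e' → 0` at `±∞`), with positive definite Hessians
`D²W(a^±)`.  If `h` is a `C²` map with `h, h' ∈ L²`, `h → 0`, `h' → 0` at `±∞`,
solving the linearized equation `h'' = D²W(e)·h` (the Hessian acting as a
real-linear map, characterized by `Re(conj(h'') k) = D²W(e)(h, k)` for all `k`),
then `h = λ e'` for a real constant `λ`. -/
theorem statement13 (f : ℂ → ℂ) (hf : Differentiable ℂ f)
    (e : ℝ → ℂ) (he : ContDiff ℝ 2 e)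
    (hODE : ∀ x : ℝ, deriv (deriv e) x = gradient (W f) (e x))
    (aminus aplus : ℂ) (hfm : f aminus = 0) (hfp : f aplus = 0) (hne : aminus ≠ aplus)
    (hlimB : Tendsto e atBot (nhds aminus)) (hlimT : Tendsto e atTop (nhds aplus))
    (hlimB' : Tendsto (deriv e) atBot (nhds 0)) (hlimT' : Tendsto (deriv e) atTop (nhds 0))
    (hposB : ∀ v : ℂ, v ≠ 0 → 0 < fderiv ℝ (fderiv ℝ (W f)) aminus v v)
    (hposT : ∀ v : ℂ, v ≠ 0 → 0 < fderiv ℝ (fderiv ℝ (W f)) aplus v v)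
    (h : ℝ → ℂ) (hh : ContDiff ℝ 2 h)
    (hL2 : MemLp h 2 volume) (hL2' : MemLp (deriv h) 2 volume)
    (hh0B : Tendsto h atBot (nhds 0)) (hh0T : Tendsto h atTop (nhds 0))
    (hh1B : Tendsto (deriv h) atBot (nhds 0)) (hh1T : Tendsto (deriv h) atTop (nhds 0))
    (hlin : ∀ x : ℝ, ∀ k : ℂ,
      ((starRingEnd ℂ) (deriv (deriv h) x) * k).re
        = fderiv ℝ (fderiv ℝ (W f)) (e x) (h x) k) :
    ∃ lam : ℝ, ∀ x : ℝ, h x = (lam : ℂ) * deriv e x :=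
  statement13_general f hf e he hODE aminus aplus hfp hne hlimB hlimT hlimT' h hh hh0B hh0T hh1B
    hh1T hlin
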